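/- arXiv:2412.07544 — 2 statements merged into one kernel-verified Lean document; each statement's English description precedes it below -/
import Mathlib

section
/- Let g : ℝᵈ → ℝᵈ be a bijection such that g is K-Lipschitz and its inverse g⁻¹ is K'-Lipschitz (K, K' > 0), with respect to the Euclidean norm. If two trajectories x^a, x^b : [0,∞) → ℝᵈ satisfy the contraction condition ‖x^a(t) − x^b(t)‖₂ ≤ α e^{−γ t} ‖x^a(0) − x^b(0)‖₂ for all t ≥ 0 with constants α, γ > 0, then the transformed trajectories satisfy ‖g(x^a(t)) − g(x^b(t))‖₂ ≤ K·K'·α · e^{−γ t} · ‖g(x^a(0)) − g(x^b(0))‖₂ for all t ≥ 0. In particular, a bi-Lipschitz bijection preserves contraction with the same rate γ. -/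
/-- A bi-Lipschitz bijection `g : ℝᵈ → ℝᵈ` (with `g` `K`-Lipschitz and
`g⁻¹` `K'`-Lipschitz, `K, K' > 0`) preserves contraction with the same rate `γ`:
if `‖xᵃ(t) − xᵇ(t)‖₂ ≤ α e^{−γ t} ‖xᵃ(0) − xᵇ(0)‖₂` for all `t ≥ 0` with `α, γ > 0`,
then `‖g(xᵃ(t)) − g(xᵇ(t))‖₂ ≤ K K' α e^{−γ t} ‖g(xᵃ(0)) − g(xᵇ(0))‖₂` for all `t ≥ 0`. -/
theorem bilipschitz_bijection_preserves_contraction {d : ℕ}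
    (g : EuclideanSpace ℝ (Fin d) → EuclideanSpace ℝ (Fin d))
    (hbij : Function.Bijective g)
    (K K' : ℝ) (hK : 0 < K) (hK' : 0 < K')
    (hg : ∀ u v, ‖g u - g v‖ ≤ K * ‖u - v‖)
    (hginv : ∀ u v, ‖Function.invFun g u - Function.invFun g v‖ ≤ K' * ‖u - v‖)
    (α γ : ℝ) (hα : 0 < α) (hγ : 0 < γ)
    (xa xb : ℝ → EuclideanSpace ℝ (Fin d))
    (hcontr : ∀ t ≥ (0 : ℝ), ‖xa t - xb t‖ ≤ α * Real.exp (-γ * t) * ‖xa 0 - xb 0‖) :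
    ∀ t ≥ (0 : ℝ),
      ‖g (xa t) - g (xb t)‖ ≤ K * K' * α * Real.exp (-γ * t) * ‖g (xa 0) - g (xb 0)‖ := by
  intro t ht
  have h0 : ‖xa 0 - xb 0‖ ≤ K' * ‖g (xa 0) - g (xb 0)‖ := by
    have := hginv (g (xa 0)) (g (xb 0))
    rwa [Function.leftInverse_invFun hbij.injective (xa 0),
      Function.leftInverse_invFun hbij.injective (xb 0)] at this
  calc ‖g (xa t) - g (xb t)‖ ≤ K * ‖xa t - xb t‖ := hg _ _
    _ ≤ K * (α * Real.exp (-γ * t) * ‖xa 0 - xb 0‖) := by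
        exact mul_le_mul_of_nonneg_left (hcontr t ht) hK.le
    _ ≤ K * (α * Real.exp (-γ * t) * (K' * ‖g (xa 0) - g (xb 0)‖)) := by
        have hpos : 0 ≤ α * Real.exp (-γ * t) := by positivity
        exact mul_le_mul_of_nonneg_left (mul_le_mul_of_nonneg_left h0 hpos) hK.le
    _ = K * K' * α * Real.exp (-γ * t) * ‖g (xa 0) - g (xb 0)‖ := by ring
end

section
/- (Theorem 1) Let H ≥ 1 and M ≥ 1 be integers and α, γ, R > 0. Let y¹, …, y^M : {0,…,H−1} → ℝⁿ be expert demonstrations with initial states y₀^m = y^m(0). For each initial state x ∈ ℝⁿ, let ŷ(x) : {0,…,H−1} → ℝⁿ denote the policy rollout starting from x, and assume the rollouts satisfy the discrete contraction property: for all x, x' ∈ ℝⁿ and all i ∈ {0,…,H−1}, ‖ŷ(x)_i − ŷ(x')_i‖₂ ≤ α e^{−γ i/H} ‖x − x'‖₂. Let ℓ denote the mean squared error, and write ŷ^m = ŷ(y₀^m). Suppose x₀ ∈ ℝⁿ satisfies x₀ ≠ y₀^m for all m and the multi-focal ellipse assumption Σ_{m=1}^{M} ‖x₀ − y₀^m‖₂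 ≤ R, and suppose the discrepancy measure satisfies the triangle inequality ℓ(ŷ(x₀), y^m) ≤ ℓ(ŷ(x₀), ŷ^m) + ℓ(ŷ^m, y^m) for every m. Then the loss L(x₀) = Σ_{m=1}^{M} λ_m(x₀) ℓ(ŷ(x₀), y^m) satisfies L(x₀) ≤ Σ_{m=1}^{M} λ_m(x₀) ℓ(ŷ^m, y^m) + α² R² (e^{−2γ} − 1) / (H · M · (e^{−2γ/H} − 1)). -/
/-!
By the triangle inequality it suffices to bound `Σ_m λ_m ℓ(ŷ(x₀), ŷ^m)`. Squaring the contraction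
bound and summing the geometric series `Σ_i e^{-2γi/H}` gives `ℓ(ŷ(x₀), ŷ^m) ≤ K ‖x₀ - y₀^m‖²` with
`K = α² (e^{-2γ} - 1) / (H (e^{-2γ/H} - 1))`. The inverse-square weights make every
`λ_m ‖x₀ - y₀^m‖²` equal to `1 / S`, where `S = Σ_m ‖x₀ - y₀^m‖⁻²`, so the weighted sum is `K M / S`;
Cauchy–Schwarz gives `M² ≤ (Σ_m ‖x₀ - y₀^m‖)² S ≤ R² S`.
-/

/-- Mean squared error between two length-`H` trajectories in `ℝⁿ`. -/
noncomputable def mse {n H : ℕ} (a b : Fin H → EuclideanSpace ℝ (Fin n)) : ℝ :=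
  (1 / H : ℝ) * ∑ i, ‖a i - b i‖ ^ 2

/-- Weights `λ_m(x) = (‖x − y₀^m‖₂²)⁻¹ / Σ_{m'} (‖x − y₀^{m'}‖₂²)⁻¹`. -/
noncomputable def lam {n M : ℕ} (y0 : Fin M → EuclideanSpace ℝ (Fin n))
    (x : EuclideanSpace ℝ (Fin n)) (m : Fin M) : ℝ :=
  (‖x - y0 m‖ ^ 2)⁻¹ / ∑ m', (‖x - y0 m'‖ ^ 2)⁻¹

open Finset Real

theorem sum_fin_exp_mul_div_eq (H : ℕ) {c : ℝ} (hc : c ≠ 0) :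
    ∑ i : Fin H, exp (c * (i : ℕ) / H) = (exp c - 1) / (exp (c / H) - 1) := by
  rcases H.eq_zero_or_pos with rfl | hH
  · -- both sides vanish: `c / 0 = 0` makes the denominator `exp 0 - 1 = 0`
    simp
  have hr : exp (c / H) ≠ 1 := by
    rw [Ne, exp_eq_one_iff]
    positivity
  have hpow : ∀ i : ℕ, exp (c * i / H) = exp (c / H) ^ i := fun i => by
    rw [← exp_nat_mul]; ring_nf
  simp_rw [hpow]
  rw [Fin.sum_univ_eq_sum_range (fun i => exp (c / H) ^ i) H, geom_sum_eq hr, ← exp_nat_mul,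
    mul_div_cancel₀ _ (by positivity)]

theorem sum_fin_sq_mul_exp_eq (H : ℕ) (α : ℝ) {γ : ℝ} (hγ : γ ≠ 0) :
    ∑ i : Fin H, (α * exp (-γ * (i : ℕ) / H)) ^ 2 =
      α ^ 2 * ((exp (-2 * γ) - 1) / (exp (-2 * γ / H) - 1)) := by
  have hsq : ∀ i : ℕ, (α * exp (-γ * i / H)) ^ 2 = α ^ 2 * exp (-2 * γ * i / H) := fun i => by
    rw [mul_pow, ← exp_nat_mul]; ring_nf
  simp_rw [hsq]
  rw [← mul_sum, sum_fin_exp_mul_div_eq H (by simpa using hγ)]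

theorem card_div_sum_inv_sq_le {ι R : Type*} [Field R] [LinearOrder R] [IsStrictOrderedRing R]
    {s : Finset ι} {d : ι → R} (hd : ∀ i ∈ s, 0 < d i) :
    (#s : R) / ∑ i ∈ s, (d i ^ 2)⁻¹ ≤ (∑ i ∈ s, d i) ^ 2 / #s := by
  rcases s.eq_empty_or_nonempty with rfl | hs
  · simp
  have hS : 0 < ∑ i ∈ s, (d i ^ 2)⁻¹ := sum_pos (fun i hi => by have := hd i hi; positivity) hs
  have hcard : (0 : R) < #s := by exact_mod_cast hs.card_pos
  have hCS : (∑ _i ∈ s, (1 : R)) ^ 2 ≤ (∑ i ∈ s, d i ^ 2) * ∑ i ∈ s, (d i ^ 2)⁻¹ :=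
    sum_sq_le_sum_mul_sum_of_sq_le_mul s (fun _ _ => sq_nonneg _)
      (fun _ _ => inv_nonneg.2 (sq_nonneg _))
      (fun i hi => by rw [mul_inv_cancel₀ (pow_pos (hd i hi) 2).ne']; norm_num)
  have hsq : ∑ i ∈ s, d i ^ 2 ≤ (∑ i ∈ s, d i) ^ 2 :=
    sum_sq_le_sq_sum_of_nonneg fun i hi => (hd i hi).le
  rw [sum_const, nsmul_one] at hCS
  rw [div_le_div_iff₀ hS hcard, ← sq]
  exact hCS.trans (mul_le_mul_of_nonneg_right hsq hS.le)

section Weights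

variable {n M : ℕ} (y0 : Fin M → EuclideanSpace ℝ (Fin n)) (x : EuclideanSpace ℝ (Fin n))

theorem lam_nonneg (m : Fin M) : 0 ≤ lam y0 x m := by
  unfold lam
  positivity

theorem lam_mul_norm_sub_sq {m : Fin M} (hx : x ≠ y0 m) :
    lam y0 x m * ‖x - y0 m‖ ^ 2 = (∑ m', (‖x - y0 m'‖ ^ 2)⁻¹)⁻¹ := by
  have : ‖x - y0 m‖ ^ 2 ≠ 0 := by simpa [sub_eq_zero] using hx
  rw [lam, div_mul_eq_mul_div, inv_mul_cancel₀ this, one_div]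

theorem sum_lam_mul_norm_sub_sq_le (hx : ∀ m, x ≠ y0 m) :
    ∑ m, lam y0 x m * ‖x - y0 m‖ ^ 2 ≤ (∑ m, ‖x - y0 m‖) ^ 2 / M := by
  simp_rw [lam_mul_norm_sub_sq y0 x (hx _)]
  rw [sum_const, card_univ, Fintype.card_fin, nsmul_eq_mul, ← div_eq_mul_inv]
  simpa using card_div_sum_inv_sq_le (s := univ)
    (fun m _ => norm_pos_iff.2 (sub_ne_zero.2 (hx m)))

end Weights

theorem mse_le_of_norm_sub_le {n H : ℕ} {a b : Fin H → EuclideanSpace ℝ (Fin n)}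
    (c : Fin H → ℝ) (d : ℝ) (h : ∀ i, ‖a i - b i‖ ≤ c i * d) :
    mse a b ≤ (∑ i, c i ^ 2) / H * d ^ 2 := by
  have hterm : ∀ i, ‖a i - b i‖ ^ 2 ≤ c i ^ 2 * d ^ 2 := fun i => by
    rw [← mul_pow]; exact pow_le_pow_left₀ (norm_nonneg _) (h i) 2
  calc mse a b ≤ 1 / H * ∑ i, c i ^ 2 * d ^ 2 :=
        mul_le_mul_of_nonneg_left (sum_le_sum fun i _ => hterm i) (by positivity)
    _ = (∑ i, c i ^ 2) / H * d ^ 2 := by rw [← sum_mul]; ring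

theorem oos_loss_upper_bound_general {n : ℕ} (H M : ℕ)
    (α γ R : ℝ) (hγ : 0 < γ)
    (y : Fin M → Fin H → EuclideanSpace ℝ (Fin n))
    (y0 : Fin M → EuclideanSpace ℝ (Fin n))
    (rollout : EuclideanSpace ℝ (Fin n) → Fin H → EuclideanSpace ℝ (Fin n))
    (hcontr : ∀ x x' : EuclideanSpace ℝ (Fin n), ∀ i : Fin H,
      ‖rollout x i - rollout x' i‖ ≤ α * Real.exp (-γ * (i : ℕ) / H) * ‖x - x'‖)
    (x0 : EuclideanSpace ℝ (Fin n))
    (hx0 : ∀ m, x0 ≠ y0 m)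
    (hellipse : ∑ m, ‖x0 - y0 m‖ ≤ R)
    (htri : ∀ m : Fin M,
      mse (rollout x0) (y m) ≤
        mse (rollout x0) (rollout (y0 m)) + mse (rollout (y0 m)) (y m)) :
    ∑ m, lam y0 x0 m * mse (rollout x0) (y m) ≤
      ∑ m, lam y0 x0 m * mse (rollout (y0 m)) (y m) +
        α ^ 2 * R ^ 2 * (Real.exp (-2 * γ) - 1) /
          (H * M * (Real.exp (-2 * γ / H) - 1)) := by
  set K := (∑ i : Fin H, (α * exp (-γ * (i : ℕ) / H)) ^ 2) / H with hK
  have hcross : ∀ m, mse (rollout x0) (rollout (y0 m)) ≤ K * ‖x0 - y0 m‖ ^ 2 := fun m =>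
    mse_le_of_norm_sub_le _ _ (hcontr x0 (y0 m))
  have hellipse_sq : (∑ m, ‖x0 - y0 m‖) ^ 2 ≤ R ^ 2 :=
    pow_le_pow_left₀ (sum_nonneg fun _ _ => norm_nonneg _) hellipse 2
  calc ∑ m, lam y0 x0 m * mse (rollout x0) (y m)
      ≤ ∑ m, lam y0 x0 m * (mse (rollout (y0 m)) (y m) + K * ‖x0 - y0 m‖ ^ 2) :=
        sum_le_sum fun m _ => mul_le_mul_of_nonneg_left
          ((htri m).trans (by rw [add_comm]; gcongr; exact hcross m)) (lam_nonneg y0 x0 m)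
    _ = ∑ m, lam y0 x0 m * mse (rollout (y0 m)) (y m) +
          K * ∑ m, lam y0 x0 m * ‖x0 - y0 m‖ ^ 2 := by
        simp only [mul_add, sum_add_distrib, mul_sum, mul_left_comm]
    _ ≤ ∑ m, lam y0 x0 m * mse (rollout (y0 m)) (y m) + K * (R ^ 2 / M) := by
        grw [sum_lam_mul_norm_sub_sq_le y0 x0 hx0, hellipse_sq]
    _ = _ := by
        rw [hK, sum_fin_sq_mul_exp_eq H α hγ.ne']
        generalize exp (-2 * γ / H) - 1 = r
        ring

/-- **Theorem 1.** Under the discrete contraction property of the rollouts,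
the multi-focal ellipse assumption on the initial state `x₀`, and the triangle inequality
for the MSE discrepancy, the loss `L(x₀) = Σ_m λ_m(x₀) ℓ(ŷ(x₀), y^m)` is upper-bounded by
`Σ_m λ_m(x₀) ℓ(ŷ^m, y^m) + α² R² (e^{−2γ} − 1) / (H M (e^{−2γ/H} − 1))`. -/
theorem oos_loss_upper_bound {n : ℕ} (H M : ℕ) (hH : 0 < H) (hM : 0 < M)
    (α γ R : ℝ) (hα : 0 < α) (hγ : 0 < γ) (hR : 0 < R)
    (y : Fin M → Fin H → EuclideanSpace ℝ (Fin n))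
    (y0 : Fin M → EuclideanSpace ℝ (Fin n))
    (hy0 : ∀ m, y0 m = y m ⟨0, hH⟩)
    (rollout : EuclideanSpace ℝ (Fin n) → Fin H → EuclideanSpace ℝ (Fin n))
    (hcontr : ∀ x x' : EuclideanSpace ℝ (Fin n), ∀ i : Fin H,
      ‖rollout x i - rollout x' i‖ ≤ α * Real.exp (-γ * (i : ℕ) / H) * ‖x - x'‖)
    (x0 : EuclideanSpace ℝ (Fin n))
    (hx0 : ∀ m, x0 ≠ y0 m)
    (hellipse : ∑ m, ‖x0 - y0 m‖ ≤ R)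
    (htri : ∀ m : Fin M,
      mse (rollout x0) (y m) ≤
        mse (rollout x0) (rollout (y0 m)) + mse (rollout (y0 m)) (y m)) :
    ∑ m, lam y0 x0 m * mse (rollout x0) (y m) ≤
      ∑ m, lam y0 x0 m * mse (rollout (y0 m)) (y m) +
        α ^ 2 * R ^ 2 * (Real.exp (-2 * γ) - 1) /
          (H * M * (Real.exp (-2 * γ / H) - 1)) :=
  oos_loss_upper_bound_general H M α γ R hγ y y0 rollout hcontr x0 hx0 hellipse htri
end
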